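/- Over F_2, if R ⊆ S_n is a maximal-cardinality family with pairwise gcd of degree at most 1 and n is even with n ≥ 4, then for every monic irreducible g of degree n/2 (with g ≠ x), g^2 ∈ R. -/

import Mathlib

/-!
Write `n = 2d`. If `g²` were missing from a maximum family `R`, we could enlarge `R`. When no
member of `R` is divisible by `g`, simply add `g²`. Otherwise exactly one member `f = g h` is
(since `deg g ≥ 2`), and we trade it for `g²` and a partner `b ∈ S_n` that is prime to `g` and
almost coprime to the rest of `R`: `b = h²`, unless `X + 1 ∣ h` while `(X + 1)²` divides another
member; then `h = (X + 1) k` and `b = k s` with `s` an irreducible of degree `d + 1` dividing no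
other member.

Such an `s` exists by counting. An irreducible of degree `d + 1` dividing a member determines it;
the cofactor has degree `d - 1`, so the member is divisible by `(X + 1)²` (true of at most one
member) or by an irreducible of degree in `[2, d - 1]` (each dividing at most one member). Gauss's
formula `∑_{t ∣ m} t N(t) = 2^m` for the number `N(t)` of irreducibles of degree `t` shows that
`N(d + 1) > 1 + ∑_{t=2}^{d-1} N(t)`.
-/

open Polynomial Finset UniqueFactorizationMonoid

namespace Polynomial

section Eval

variable {R : Type*} [CommSemiring R]

theorem ne_zero_of_eval_ne_zero {p : R[X]} {x : R} (h : p.eval x ≠ 0) : p ≠ 0 := by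
  rintro rfl
  exact h eval_zero

theorem eval_ne_zero_of_dvd {p e : R[X]} {x : R} (hpe : p ∣ e) (he : e.eval x ≠ 0) :
    p.eval x ≠ 0 := by
  obtain ⟨c, rfl⟩ := hpe
  exact left_ne_zero_of_mul (eval_mul (p := p) ▸ he)

end Eval

section FiniteField

variable (K : Type*) [Field K] [Finite K]

theorem finite_setOf_natDegree_le (n : ℕ) : {p : K[X] | p.natDegree ≤ n}.Finite :=
  (Set.finite_range fun c : Fin (n + 1) → K => ∑ i, C (c i) * X ^ (i : ℕ)).subset fun p hp =>
    ⟨fun i => p.coeff i, by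
      simp only [Fin.sum_univ_eq_sum_range (fun i => C (p.coeff i) * X ^ i)]
      exact (as_sum_range_C_mul_X_pow' p (Nat.lt_succ_of_le hp)).symm⟩

noncomputable def monicIrreducibles (t : ℕ) : Finset K[X] :=
  ((finite_setOf_natDegree_le K t).subset fun _ hp => hp.2.2.le :
    {p : K[X] | p.Monic ∧ Irreducible p ∧ p.natDegree = t}.Finite).toFinset

variable {K} in
@[simp]
theorem mem_monicIrreducibles {t : ℕ} {p : K[X]} :
    p ∈ monicIrreducibles K t ↔ p.Monic ∧ Irreducible p ∧ p.natDegree = t := by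
  simp [monicIrreducibles]

theorem nodup_normalizedFactors_X_pow_card_pow_sub_X {m : ℕ} (hm : m ≠ 0) [DecidableEq K] :
    (normalizedFactors (X ^ Nat.card K ^ m - X : K[X])).Nodup := by
  have := Fintype.ofFinite K
  have hsep : (X ^ Nat.card K ^ m - X : K[X]).Separable := by
    refine galois_poly_separable (ringChar K) _ (dvd_pow ?_ hm)
    rw [← ringChar.spec, Nat.card_eq_fintype_card]
    exact FiniteField.cast_card_eq_zero K
  exact (squarefree_iff_nodup_normalizedFactors
    (FiniteField.X_pow_card_pow_sub_X_ne_zero K hm Finite.one_lt_card)).mp hsep.squarefree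

theorem mem_normalizedFactors_X_pow_card_pow_sub_X {m : ℕ} (hm : m ≠ 0) [DecidableEq K]
    {p : K[X]} :
    p ∈ normalizedFactors (X ^ Nat.card K ^ m - X : K[X]) ↔
      p.Monic ∧ Irreducible p ∧ p.natDegree ∣ m := by
  rw [Polynomial.mem_normalizedFactors_iff
    (FiniteField.X_pow_card_pow_sub_X_ne_zero K hm Finite.one_lt_card)]
  constructor
  · rintro ⟨hi, hmon, hdvd⟩
    exact ⟨hmon, hi, hi.natDegree_dvd_iff_dvd_X_pow_card_pow_sub_X.mpr hdvd⟩
  · rintro ⟨hmon, hi, hdvd⟩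
    exact ⟨hi, hmon, hi.natDegree_dvd_iff_dvd_X_pow_card_pow_sub_X.mp hdvd⟩

/-- Gauss's formula: `X ^ q ^ m - X` is the product of the monic irreducibles of degree
dividing `m`. -/
theorem sum_divisors_mul_card_monicIrreducibles {m : ℕ} (hm : m ≠ 0) :
    ∑ t ∈ m.divisors, t * #(monicIrreducibles K t) = Nat.card K ^ m := by
  classical
  set P : K[X] := X ^ Nat.card K ^ m - X
  set F := (normalizedFactors P).toFinset
  have hmemF (p : K[X]) : p ∈ F ↔ p.Monic ∧ Irreducible p ∧ p.natDegree ∣ m := by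
    rw [Multiset.mem_toFinset, mem_normalizedFactors_X_pow_card_pow_sub_X K hm]
  have hfiber (t : ℕ) (ht : t ∈ m.divisors) :
      {p ∈ F | p.natDegree = t} = monicIrreducibles K t := by
    ext p
    simp only [mem_filter, hmemF, mem_monicIrreducibles]
    exact ⟨fun ⟨⟨hmon, hi, _⟩, hdeg⟩ => ⟨hmon, hi, hdeg⟩,
      fun ⟨hmon, hi, hdeg⟩ => ⟨⟨hmon, hi, hdeg ▸ Nat.dvd_of_mem_divisors ht⟩, hdeg⟩⟩
  have hprod : (∏ p ∈ F, p).natDegree = P.natDegree := by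
    rw [prod_eq_multiset_prod, Multiset.toFinset_val,
      (nodup_normalizedFactors_X_pow_card_pow_sub_X K hm).dedup, Multiset.map_id']
    exact natDegree_eq_of_degree_eq (degree_eq_degree_of_associated (prod_normalizedFactors
      (FiniteField.X_pow_card_pow_sub_X_ne_zero K hm Finite.one_lt_card)))
  calc ∑ t ∈ m.divisors, t * #(monicIrreducibles K t)
      = ∑ t ∈ m.divisors, ∑ p ∈ F with p.natDegree = t, p.natDegree := by
        refine sum_congr rfl fun t ht => ?_
        rw [sum_congr rfl fun p hp => (mem_filter.mp hp).2, sum_const, smul_eq_mul, hfiber t ht,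
          mul_comm]
    _ = ∑ p ∈ F, p.natDegree :=
        sum_fiberwise_of_maps_to
          (fun p hp => Nat.mem_divisors.mpr ⟨((hmemF p).mp hp).2.2, hm⟩) _
    _ = P.natDegree := by
        rw [← hprod, natDegree_prod _ _ fun p hp => ((hmemF p).mp hp).2.1.ne_zero]
    _ = Nat.card K ^ m := FiniteField.X_pow_card_pow_sub_X_natDegree_eq K hm Finite.one_lt_card

theorem mul_card_monicIrreducibles_le (t : ℕ) :
    t * #(monicIrreducibles K t) ≤ Nat.card K ^ t := by
  rcases eq_or_ne t 0 with rfl | ht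
  · simp
  rw [← sum_divisors_mul_card_monicIrreducibles K ht]
  exact single_le_sum (f := fun t => t * #(monicIrreducibles K t)) (fun _ _ => Nat.zero_le _)
    (Nat.mem_divisors_self t ht)

end FiniteField

section AlmostCoprime

variable {K : Type*} [Field K] [DecidableEq K]

def AlmostCoprime (f g : K[X]) : Prop := (EuclideanDomain.gcd f g).natDegree ≤ 1

theorem AlmostCoprime.symm {f g : K[X]} (h : AlmostCoprime f g) : AlmostCoprime g f := by
  have hswap (a b : K[X]) : EuclideanDomain.gcd a b ∣ EuclideanDomain.gcd b a :=
    EuclideanDomain.dvd_gcd (EuclideanDomain.gcd_dvd_right a b) (EuclideanDomain.gcd_dvd_left a b)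
  have : Associated (EuclideanDomain.gcd g f) (EuclideanDomain.gcd f g) :=
    associated_of_dvd_dvd (hswap g f) (hswap f g)
  rwa [AlmostCoprime, natDegree_eq_of_degree_eq (degree_eq_degree_of_associated this)]

instance : Std.Symm (AlmostCoprime (K := K)) := ⟨fun _ _ => AlmostCoprime.symm⟩

theorem almostCoprime_iff {f g : K[X]} (hf : f ≠ 0) :
    AlmostCoprime f g ↔ ∀ q, q ∣ f → q ∣ g → q.natDegree ≤ 1 := by
  refine ⟨fun h q hqf hqg => ?_, fun h => h _ (EuclideanDomain.gcd_dvd_left f g)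
    (EuclideanDomain.gcd_dvd_right f g)⟩
  have hgcd : EuclideanDomain.gcd f g ≠ 0 :=
    fun h0 => hf (EuclideanDomain.gcd_eq_zero_iff.mp h0).1
  exact (natDegree_le_of_dvd (EuclideanDomain.dvd_gcd hqf hqg) hgcd).trans h

theorem _root_.IsCoprime.almostCoprime {f g : K[X]} (h : IsCoprime f g) : AlmostCoprime f g := by
  have := h.isUnit_of_dvd' (EuclideanDomain.gcd_dvd_left f g) (EuclideanDomain.gcd_dvd_right f g)
  rw [AlmostCoprime, natDegree_eq_zero_of_isUnit this]
  exact zero_le_one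

end AlmostCoprime

end Polynomial

namespace MaximalGcdFamily

theorem zmod_two_eq_one {a : ZMod 2} (ha : a ≠ 0) : a = 1 := by
  fin_cases a
  · exact absurd rfl ha
  · rfl

theorem monic_of_ne_zero {p : (ZMod 2)[X]} (hp : p ≠ 0) : p.Monic :=
  zmod_two_eq_one (leadingCoeff_ne_zero.mpr hp)

theorem eq_of_irreducible_of_dvd {p q : (ZMod 2)[X]} (hp : Irreducible p) (hq : Irreducible q)
    (h : p ∣ q) : p = q :=
  eq_of_monic_of_associated (monic_of_ne_zero hp.ne_zero) (monic_of_ne_zero hq.ne_zero)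
    (hp.associated_of_dvd hq h)

theorem eq_of_irreducible_of_dvd_of_natDegree_lt {s s' e : (ZMod 2)[X]} (hs : Irreducible s)
    (hs' : Irreducible s') (he : e ≠ 0) (hdeg : e.natDegree < s.natDegree + s'.natDegree)
    (h : s ∣ e) (h' : s' ∣ e) : s = s' := by
  by_contra hne
  have hcop : IsCoprime s s' :=
    (hs.coprime_iff_not_dvd).mpr fun hdvd => hne (eq_of_irreducible_of_dvd hs hs' hdvd)
  have := natDegree_le_of_dvd (hcop.mul_dvd h h') he
  rw [natDegree_mul hs.ne_zero hs'.ne_zero] at this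
  omega

theorem natDegree_X_add_one : (X + 1 : (ZMod 2)[X]).natDegree = 1 := natDegree_X_add_C 1

theorem irreducible_X_add_one : Irreducible (X + 1 : (ZMod 2)[X]) :=
  irreducible_of_degree_eq_one (degree_X_add_C 1)

theorem eval_zero_ne_zero_of_irreducible {p : (ZMod 2)[X]} (hp : Irreducible p) (hpX : p ≠ X) :
    p.eval 0 ≠ 0 := fun h0 =>
  hpX (eq_of_irreducible_of_dvd irreducible_X hp
    (X_dvd_iff.mpr (by rwa [coeff_zero_eq_eval_zero]))).symm

theorem eq_X_add_one_of_irreducible {p : (ZMod 2)[X]} (hp : Irreducible p)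
    (hdeg : p.natDegree ≤ 1) (h0 : p.eval 0 ≠ 0) : p = X + 1 := by
  have h1 : p.natDegree = 1 := le_antisymm hdeg hp.natDegree_pos
  rw [(monic_of_ne_zero hp.ne_zero).eq_X_add_C h1,
    zmod_two_eq_one (a := p.coeff 0) (by rwa [coeff_zero_eq_eval_zero]), map_one]

theorem sq_X_add_one_dvd {G : (ZMod 2)[X]} (h0 : G.eval 0 ≠ 0) (hdeg : 2 ≤ G.natDegree)
    (hlin : ∀ p, Irreducible p → p ∣ G → p.natDegree ≤ 1) : (X + 1) ^ 2 ∣ G := by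
  have hG : G ≠ 0 := ne_zero_of_eval_ne_zero h0
  have key (H : (ZMod 2)[X]) (hH : H ∣ G) (hdegH : 1 ≤ H.natDegree) : X + 1 ∣ H := by
    have hH0 : H ≠ 0 := ne_zero_of_dvd_ne_zero hG hH
    have hunit : ¬IsUnit H := fun hu => by rw [natDegree_eq_zero_of_isUnit hu] at hdegH; omega
    obtain ⟨p, hp, hpH⟩ := WfDvdMonoid.exists_irreducible_factor hunit hH0
    rwa [← eq_X_add_one_of_irreducible hp (hlin p hp (hpH.trans hH))
      (eval_ne_zero_of_dvd (hpH.trans hH) h0)]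
  obtain ⟨G', rfl⟩ := key G dvd_rfl (by omega)
  have hG' : G' ≠ 0 := right_ne_zero_of_mul hG
  rw [natDegree_mul irreducible_X_add_one.ne_zero hG', natDegree_X_add_one] at hdeg
  rw [sq]
  exact mul_dvd_mul_left _ (key G' (dvd_mul_left _ _) (by omega))

theorem two_le_card_monicIrreducibles_one : 2 ≤ #(monicIrreducibles (ZMod 2) 1) := by
  have hsub : {X, X + 1} ⊆ monicIrreducibles (ZMod 2) 1 := by
    intro p hp
    rcases mem_insert.mp hp with rfl | hp
    · exact mem_monicIrreducibles.mpr ⟨monic_X, irreducible_X, natDegree_X⟩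
    · rw [mem_singleton.mp hp]
      exact mem_monicIrreducibles.mpr
        ⟨monic_X_add_C 1, irreducible_X_add_one, natDegree_X_add_one⟩
  have hne : (X : (ZMod 2)[X]) ≠ X + 1 := fun h => by simpa using congrArg (eval 0) h
  exact (card_pair hne).symm.le.trans (card_le_card hsub)

theorem mul_card_monicIrreducibles_add_two_le {t : ℕ} (ht : 2 ≤ t) :
    t * #(monicIrreducibles (ZMod 2) t) + 2 ≤ 2 ^ t := by
  have hsub : {1, t} ⊆ t.divisors := by
    intro s hs
    rcases mem_insert.mp hs with rfl | hs
    · exact Nat.one_mem_divisors.mpr (by omega)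
    · exact mem_singleton.mp hs ▸ Nat.mem_divisors_self t (by omega)
  have hsum := sum_le_sum_of_subset (f := fun s => s * #(monicIrreducibles (ZMod 2) s)) hsub
  rw [sum_pair (by omega), sum_divisors_mul_card_monicIrreducibles _ (by omega),
    Nat.card_zmod] at hsum
  have := two_le_card_monicIrreducibles_one
  omega

theorem two_pow_add_one_le_mul_card_monicIrreducibles {m : ℕ} (hm : m ≠ 0) :
    2 ^ m + 1 ≤ m * #(monicIrreducibles (ZMod 2) m) + 2 ^ (m / 2 + 1) := by
  have hgauss := sum_divisors_mul_card_monicIrreducibles (ZMod 2) hm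
  rw [← Nat.cons_self_properDivisors hm, sum_cons, Nat.card_zmod] at hgauss
  have hsub : m.properDivisors ⊆ range (m / 2 + 1) := by
    intro t ht
    obtain ⟨⟨k, rfl⟩, hlt⟩ := Nat.mem_properDivisors.mp ht
    have hk : 1 < k := Nat.lt_of_mul_lt_mul_left (by rwa [mul_one])
    rw [mem_range, Nat.lt_succ_iff, Nat.le_div_iff_mul_le two_pos]
    exact Nat.mul_le_mul_left t hk
  have hproper : ∑ t ∈ m.properDivisors, t * #(monicIrreducibles (ZMod 2) t) ≤
      2 ^ (m / 2 + 1) - 1 := calc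
    _ ≤ ∑ t ∈ m.properDivisors, 2 ^ t := sum_le_sum fun t _ => by
        simpa using mul_card_monicIrreducibles_le (ZMod 2) t
    _ ≤ ∑ t ∈ range (m / 2 + 1), 2 ^ t := sum_le_sum_of_subset hsub
    _ = 2 ^ (m / 2 + 1) - 1 := by simp [Nat.geomSum_eq le_rfl]
  have := Nat.one_le_two_pow (n := m / 2 + 1)
  omega

theorem card_monicIrreducibles_le_div {t : ℕ} (ht : 2 ≤ t) :
    #(monicIrreducibles (ZMod 2) t) ≤ (2 ^ t - 2) / t := by
  rw [Nat.le_div_iff_mul_le (by omega), mul_comm]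
  have := mul_card_monicIrreducibles_add_two_le ht
  omega

-- The numerical core of `sum_card_monicIrreducibles_add_two_le`, after bounding
-- `N(t) ≤ (2 ^ t - 2) / t`.
theorem mul_sum_two_pow_sub_two_div_add_le {M : ℕ} (hM : 2 ≤ M) :
    (M + 2) * (∑ t ∈ Icc 2 M, (2 ^ t - 2) / t + 2) + 2 ^ ((M + 2) / 2 + 1) ≤
      2 ^ (M + 2) + M + 2 := by
  obtain hM' | hM' := lt_or_ge M 7
  · interval_cases M <;> decide
  induction M, hM' using Nat.le_induction with
  | base => decide
  | succ M hM ih =>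
    set σ := ∑ t ∈ Icc 2 M, (2 ^ t - 2) / t
    set ν := (2 ^ (M + 1) - 2) / (M + 1)
    have ih := ih (by omega)
    rw [sum_Icc_succ_top (by omega), show M + 1 + 2 = M + 3 by ring]
    have hexp :
        (M + 3) * (σ + ν + 2) = (M + 2) * (σ + 2) + (σ + 2) + (M + 1) * ν + 2 * ν := by
      ring
    have hpow (k : ℕ) : 2 ^ (M + k) = 2 ^ (M - 2) * 2 ^ (k + 2) := by
      rw [← pow_add]; congr 1; omega
    have h2 := hpow 1
    have h3 := hpow 2
    have h4 := hpow 3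
    have hE : 2 ^ ((M + 2) / 2 + 1) ≤ 2 ^ (M - 2) := Nat.pow_le_pow_right two_pos (by omega)
    have hE' : 2 ^ ((M + 3) / 2 + 1) ≤ 2 * 2 ^ ((M + 2) / 2 + 1) := by
      rw [← pow_succ']; exact Nat.pow_le_pow_right two_pos (by omega)
    have hQ : M - 2 < 2 ^ (M - 2) := Nat.lt_two_pow_self
    have hσ : 9 * (σ + 2) ≤ (M + 2) * (σ + 2) := Nat.mul_le_mul_right _ (by omega)
    have hν : (M + 1) * ν ≤ 2 ^ (M + 1) - 2 := by rw [mul_comm]; exact Nat.div_mul_le_self _ _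
    have hν' : 8 * ν ≤ (M + 1) * ν := Nat.mul_le_mul_right _ (by omega)
    rw [hexp]
    omega

theorem sum_card_monicIrreducibles_add_two_le {d : ℕ} (hd : 3 ≤ d) :
    ∑ t ∈ Icc 2 (d - 1), #(monicIrreducibles (ZMod 2) t) + 2 ≤
      #(monicIrreducibles (ZMod 2) (d + 1)) := by
  obtain ⟨M, rfl⟩ : ∃ M, d = M + 1 := ⟨d - 1, by omega⟩
  rw [Nat.add_sub_cancel, show M + 1 + 1 = M + 2 by ring]
  have hsum : ∑ t ∈ Icc 2 M, #(monicIrreducibles (ZMod 2) t) ≤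
      ∑ t ∈ Icc 2 M, (2 ^ t - 2) / t :=
    sum_le_sum fun t ht => card_monicIrreducibles_le_div (mem_Icc.mp ht).1
  have hlow := two_pow_add_one_le_mul_card_monicIrreducibles (m := M + 2) (by omega)
  have hnum := mul_sum_two_pow_sub_two_div_add_le (M := M) (by omega)
  have hmul := Nat.mul_le_mul_left (M + 2) (Nat.add_le_add_right hsum 2)
  suffices (M + 2) * (∑ t ∈ Icc 2 M, #(monicIrreducibles (ZMod 2) t) + 2) <
      (M + 2) * (#(monicIrreducibles (ZMod 2) (M + 2)) + 1) by
    have := Nat.lt_of_mul_lt_mul_left this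
    omega
  rw [mul_add_one]
  omega

def S (n : ℕ) : Set (ZMod 2)[X] := {f | f.Monic ∧ f.natDegree = n ∧ f.eval 0 ≠ 0}

theorem mem_S {n : ℕ} {f : (ZMod 2)[X]} : f ∈ S n ↔ f.natDegree = n ∧ f.eval 0 ≠ 0 :=
  ⟨fun h => h.2, fun h => ⟨monic_of_ne_zero (ne_zero_of_eval_ne_zero h.2), h⟩⟩

theorem ne_zero_of_mem_S {n : ℕ} {f : (ZMod 2)[X]} (hf : f ∈ S n) : f ≠ 0 :=
  ne_zero_of_eval_ne_zero hf.2.2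

theorem mem_S_of_mul_mem_S {m n : ℕ} {g h : (ZMod 2)[X]} (hgh : g * h ∈ S n)
    (hdeg : g.natDegree + m = n) : h ∈ S m := by
  have h0 := ne_zero_of_mem_S hgh
  refine mem_S.mpr ⟨?_, eval_ne_zero_of_dvd (dvd_mul_left h g) hgh.2.2⟩
  have := hgh.2.1
  rw [natDegree_mul (left_ne_zero_of_mul h0) (right_ne_zero_of_mul h0)] at this
  omega

theorem finite_S (n : ℕ) : (S n).Finite :=
  (finite_setOf_natDegree_le (ZMod 2) n).subset fun _ hf => hf.2.1.le

theorem sq_mem_S {d : ℕ} {h : (ZMod 2)[X]} (hh : h ∈ S d) : h ^ 2 ∈ S (2 * d) :=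
  mem_S.mpr ⟨by rw [natDegree_pow, hh.2.1, mul_comm],
    by rw [eval_pow]; exact pow_ne_zero _ hh.2.2⟩

def IsAdmissible (n : ℕ) (R : Set (ZMod 2)[X]) : Prop := R ⊆ S n ∧ R.Pairwise AlmostCoprime

namespace IsAdmissible

variable {n : ℕ} {R T : Set (ZMod 2)[X]}

theorem mono (hR : IsAdmissible n R) (hT : T ⊆ R) : IsAdmissible n T :=
  ⟨hT.trans hR.1, hR.2.mono hT⟩

theorem insert (hR : IsAdmissible n R) {a : (ZMod 2)[X]} (ha : a ∈ S n)
    (h : ∀ e ∈ R, a ≠ e → AlmostCoprime a e) : IsAdmissible n (insert a R) :=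
  ⟨Set.insert_subset ha hR.1, Set.pairwise_insert_of_symm.mpr ⟨hR.2, h⟩⟩

theorem eq_of_dvd (hR : IsAdmissible n R) {e₁ e₂ q : (ZMod 2)[X]} (h₁ : e₁ ∈ R)
    (h₂ : e₂ ∈ R) (hq : 2 ≤ q.natDegree) (hq₁ : q ∣ e₁) (hq₂ : q ∣ e₂) :
    e₁ = e₂ := by
  by_contra hne
  have := (almostCoprime_iff (ne_zero_of_mem_S (hR.1 h₁))).mp (hR.2 h₁ h₂ hne) q hq₁ hq₂
  omega

end IsAdmissible

theorem almostCoprime_sq_of_dvd {f e h : (ZMod 2)[X]} (hfe : AlmostCoprime f e) (hf : f ≠ 0)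
    (he : e.eval 0 ≠ 0) (hhf : h ∣ f) (hX : X + 1 ∣ h → ¬(X + 1) ^ 2 ∣ e) :
    AlmostCoprime (h ^ 2) e := by
  have hcommon := (almostCoprime_iff hf).mp hfe
  refine (almostCoprime_iff (pow_ne_zero 2 (ne_zero_of_dvd_ne_zero hf hhf))).mpr
    fun q hqh hqe => ?_
  by_contra! hq
  have hsq : (X + 1) ^ 2 ∣ q := sq_X_add_one_dvd (eval_ne_zero_of_dvd hqe he) hq fun p hp hpq =>
    hcommon p ((hp.prime.dvd_of_dvd_pow (hpq.trans hqh)).trans hhf) (hpq.trans hqe)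
  exact hX (irreducible_X_add_one.prime.dvd_of_dvd_pow
    ((dvd_pow_self _ two_ne_zero).trans (hsq.trans hqh))) (hsq.trans hqe)

noncomputable def smallFactors (d : ℕ) : Finset (ZMod 2)[X] :=
  insert ((X + 1) ^ 2) ((Icc 2 (d - 1)).biUnion (monicIrreducibles (ZMod 2)))

theorem two_le_natDegree_of_mem_smallFactors {d : ℕ} {q : (ZMod 2)[X]}
    (hq : q ∈ smallFactors d) : 2 ≤ q.natDegree := by
  rcases mem_insert.mp hq with rfl | hq
  · rw [natDegree_pow, natDegree_X_add_one]
  · obtain ⟨t, ht, hq⟩ := mem_biUnion.mp hq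
    exact (mem_monicIrreducibles.mp hq).2.2 ▸ (mem_Icc.mp ht).1

theorem card_smallFactors_le (d : ℕ) :
    #(smallFactors d) ≤ ∑ t ∈ Icc 2 (d - 1), #(monicIrreducibles (ZMod 2) t) + 1 :=
  (card_insert_le _ _).trans (Nat.add_le_add_right card_biUnion_le 1)

theorem exists_mem_smallFactors_dvd {d : ℕ} (hd : 3 ≤ d) {e s : (ZMod 2)[X]}
    (he : e ∈ S (2 * d)) (hsdeg : s.natDegree = d + 1) (hse : s ∣ e) :
    ∃ q ∈ smallFactors d, q ∣ e := by
  obtain ⟨c, rfl⟩ := hse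
  have hc : c ∈ S (d - 1) := mem_S_of_mul_mem_S he (by omega)
  by_cases hbig : ∃ p, Irreducible p ∧ p ∣ c ∧ 2 ≤ p.natDegree
  · obtain ⟨p, hp, hpc, hpdeg⟩ := hbig
    have hple : p.natDegree ≤ d - 1 := hc.2.1 ▸ natDegree_le_of_dvd hpc (ne_zero_of_mem_S hc)
    refine ⟨p, mem_insert_of_mem (mem_biUnion.mpr ⟨_, mem_Icc.mpr ⟨hpdeg, hple⟩, ?_⟩),
      dvd_mul_of_dvd_right hpc s⟩
    exact mem_monicIrreducibles.mpr ⟨monic_of_ne_zero hp.ne_zero, hp, rfl⟩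
  · push Not at hbig
    have hsq := sq_X_add_one_dvd hc.2.2 (by rw [hc.2.1]; omega)
      fun p hp hpc => Nat.le_of_lt_succ (hbig p hp hpc)
    exact ⟨_, mem_insert_self _ _, dvd_mul_of_dvd_right hsq s⟩

theorem exists_irreducible_forall_not_dvd {d : ℕ} {T : Set (ZMod 2)[X]}
    (hT : IsAdmissible (2 * d) T) (hd : 3 ≤ d) :
    ∃ s, Irreducible s ∧ s.natDegree = d + 1 ∧ ∀ e ∈ T, ¬s ∣ e := by
  by_contra! hcon
  set A := monicIrreducibles (ZMod 2) (d + 1)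
  choose! e heT hse using fun s (hs : s ∈ A) =>
    hcon s (mem_monicIrreducibles.mp hs).2.1 (mem_monicIrreducibles.mp hs).2.2
  choose! q hqD hqe using fun s (hs : s ∈ A) =>
    exists_mem_smallFactors_dvd hd (hT.1 (heT s hs)) (mem_monicIrreducibles.mp hs).2.2 (hse s hs)
  have hinj : Set.InjOn q A := by
    intro s hs s' hs' hqq
    have hee : e s = e s' := hT.eq_of_dvd (heT s hs) (heT s' hs')
      (two_le_natDegree_of_mem_smallFactors (hqD s hs)) (hqe s hs) (hqq ▸ hqe s' hs')
    obtain ⟨-, hirr, hdeg⟩ := mem_monicIrreducibles.mp hs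
    obtain ⟨-, hirr', hdeg'⟩ := mem_monicIrreducibles.mp hs'
    have he := hT.1 (heT s hs)
    exact eq_of_irreducible_of_dvd_of_natDegree_lt hirr hirr' (ne_zero_of_mem_S he)
      (by rw [he.2.1, hdeg, hdeg']; omega) (hse s hs) (hee ▸ hse s' hs')
  have hcard := (card_le_card_of_injOn q (fun s hs => hqD s hs) hinj).trans
    (card_smallFactors_le d)
  have : ∑ t ∈ Icc 2 (d - 1), #(monicIrreducibles (ZMod 2) t) + 2 ≤ #A :=
    sum_card_monicIrreducibles_add_two_le hd
  omega

-- Together with `g ^ 2`, such a `b` replaces the member `g * h` of `R` in `T = R \ {g * h}`.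
def IsExchangePartner (n : ℕ) (T : Set (ZMod 2)[X]) (g b : (ZMod 2)[X]) : Prop :=
  b ∈ S n ∧ b ∉ T ∧ ¬g ∣ b ∧ ∀ e ∈ T, AlmostCoprime b e

theorem isExchangePartner_sq {d : ℕ} {R : Set (ZMod 2)[X]} (hR : IsAdmissible (2 * d) R)
    (hd : 2 ≤ d) {g h : (ZMod 2)[X]} (hg : Irreducible g) (hfR : g * h ∈ R) (hhS : h ∈ S d)
    (hgh : ¬g ∣ h) (hX : X + 1 ∣ h → ∀ e ∈ R \ {g * h}, ¬(X + 1) ^ 2 ∣ e) :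
    IsExchangePartner (2 * d) (R \ {g * h}) g (h ^ 2) := by
  have hf0 := ne_zero_of_mem_S (hR.1 hfR)
  refine ⟨sq_mem_S hhS, fun ⟨hR', hne⟩ => hne ?_, ?_, fun e he => ?_⟩
  · exact hR.eq_of_dvd hR' hfR (hhS.2.1 ▸ hd) (dvd_pow_self h two_ne_zero) (dvd_mul_left h g)
  · exact fun hgb => hgh (hg.prime.dvd_of_dvd_pow hgb)
  · exact almostCoprime_sq_of_dvd (hR.2 hfR he.1 (Ne.symm he.2)) hf0 (hR.1 he.1).2.2
      (dvd_mul_left h g) fun hXh => hX hXh e he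

theorem exists_isExchangePartner_mul {d : ℕ} {R : Set (ZMod 2)[X]}
    (hR : IsAdmissible (2 * d) R) (hd : 2 ≤ d) {g k : (ZMod 2)[X]} (hg : Irreducible g)
    (hgdeg : g.natDegree = d) (hfR : g * ((X + 1) * k) ∈ R) (hhS : (X + 1) * k ∈ S d)
    {e₀ : (ZMod 2)[X]} (he₀ : e₀ ∈ R \ {g * ((X + 1) * k)})
    (hXe₀ : (X + 1) ^ 2 ∣ e₀) :
    ∃ s, IsExchangePartner (2 * d) (R \ {g * ((X + 1) * k)}) g (k * s) := by
  have hf0 := ne_zero_of_mem_S (hR.1 hfR)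
  have hk : k ∈ S (d - 1) := mem_S_of_mul_mem_S hhS (by rw [natDegree_X_add_one]; omega)
  have hk0 := ne_zero_of_mem_S hk
  obtain ⟨-, hkdeg, hk_eval⟩ := hk
  have hXk : ¬X + 1 ∣ k := by
    intro hdvd
    have hsq : (X + 1) ^ 2 ∣ g * ((X + 1) * k) :=
      dvd_mul_of_dvd_right (by rw [sq]; exact mul_dvd_mul_left _ hdvd) g
    exact he₀.2 (hR.eq_of_dvd he₀.1 hfR (by rw [natDegree_pow, natDegree_X_add_one]) hXe₀ hsq)
  have hd3 : 3 ≤ d := by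
    by_contra! hd3
    have hk1 : k.natDegree = 1 := by omega
    have hkX : k = X + 1 := eq_X_add_one_of_irreducible
      (irreducible_of_degree_eq_one ((degree_eq_iff_natDegree_eq hk0).mpr hk1)) hk1.le hk_eval
    exact hXk (hkX ▸ dvd_rfl)
  obtain ⟨s, hs, hsdeg, hsT⟩ := exists_irreducible_forall_not_dvd
    (hR.mono (T := R \ {g * ((X + 1) * k)}) Set.sdiff_subset) hd3
  have hs_eval : s.eval 0 ≠ 0 :=
    eval_zero_ne_zero_of_irreducible hs fun h => by rw [h, natDegree_X] at hsdeg; omega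
  refine ⟨s, mem_S.mpr ⟨?_, ?_⟩, fun he => hsT _ he (dvd_mul_left s k), ?_, fun e he => ?_⟩
  · rw [natDegree_mul hk0 hs.ne_zero, hkdeg, hsdeg]
    omega
  · rw [eval_mul]
    exact mul_ne_zero hk_eval hs_eval
  · intro hgb
    rcases hg.prime.dvd_or_dvd hgb with hgk | hgs
    · have := natDegree_le_of_dvd hgk hk0
      omega
    · rw [eq_of_irreducible_of_dvd hg hs hgs] at hgdeg
      omega
  · refine (IsCoprime.mul_left ?_ (hs.coprime_iff_not_dvd.mpr (hsT e he))).almostCoprime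
    refine isCoprime_of_irreducible_dvd (fun h0 => hk0 h0.1) fun p hp hpk hpe => hXk ?_
    have hpf : p ∣ g * ((X + 1) * k) := dvd_mul_of_dvd_right (dvd_mul_of_dvd_right hpk _) g
    have hpdeg := (almostCoprime_iff hf0).mp (hR.2 hfR he.1 (Ne.symm he.2)) p hpf hpe
    rwa [← eq_X_add_one_of_irreducible hp hpdeg (eval_ne_zero_of_dvd hpe (hR.1 he.1).2.2)]

theorem exists_isExchangePartner {d : ℕ} {R : Set (ZMod 2)[X]} (hR : IsAdmissible (2 * d) R)
    (hd : 2 ≤ d) {g h : (ZMod 2)[X]} (hg : Irreducible g) (hgdeg : g.natDegree = d)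
    (hfR : g * h ∈ R) (hg2 : g ^ 2 ∉ R) :
    ∃ b, IsExchangePartner (2 * d) (R \ {g * h}) g b := by
  have hhS : h ∈ S d := mem_S_of_mul_mem_S (hR.1 hfR) (by omega)
  by_cases hX : X + 1 ∣ h ∧ ∃ e₀ ∈ R \ {g * h}, (X + 1) ^ 2 ∣ e₀
  · obtain ⟨⟨k, rfl⟩, e₀, he₀, hXe₀⟩ := hX
    obtain ⟨s, hs⟩ := exists_isExchangePartner_mul hR hd hg hgdeg hfR hhS he₀ hXe₀
    exact ⟨k * s, hs⟩
  · have hgh : ¬g ∣ h := by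
      rintro ⟨c, rfl⟩
      have hc : c ∈ S 0 := mem_S_of_mul_mem_S hhS (by omega)
      have hc1 : c = 1 := (monic_of_ne_zero (ne_zero_of_mem_S hc)).natDegree_eq_zero.mp hc.2.1
      exact hg2 (by rwa [hc1, mul_one, ← sq] at hfR)
    exact ⟨h ^ 2, isExchangePartner_sq hR hd hg hfR hhS hgh
      fun hXh e he hXe => hX ⟨hXh, e, he, hXe⟩⟩

theorem exists_admissible_ncard_gt {d : ℕ} {R : Set (ZMod 2)[X]} (hR : IsAdmissible (2 * d) R)
    (hd : 2 ≤ d) {g : (ZMod 2)[X]} (hg : Irreducible g) (hgdeg : g.natDegree = d) (hgX : g ≠ X)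
    (hg2 : g ^ 2 ∉ R) : ∃ R', IsAdmissible (2 * d) R' ∧ R.ncard < R'.ncard := by
  have hRfin : R.Finite := (finite_S _).subset hR.1
  have hg2S := sq_mem_S (mem_S.mpr ⟨hgdeg, eval_zero_ne_zero_of_irreducible hg hgX⟩)
  have hcop (e : (ZMod 2)[X]) (he : ¬g ∣ e) : AlmostCoprime (g ^ 2) e :=
    ((hg.coprime_iff_not_dvd.mpr he).pow_left).almostCoprime
  by_cases hex : ∃ f ∈ R, g ∣ f
  · obtain ⟨f, hfR, h, rfl⟩ := hex
    obtain ⟨b, hbS, hbT, hgb, hb⟩ := exists_isExchangePartner hR hd hg hgdeg hfR hg2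
    have hT (e) (he : e ∈ R \ {g * h}) : ¬g ∣ e := fun hge =>
      he.2 (hR.eq_of_dvd he.1 hfR (by omega) hge (dvd_mul_right g h))
    have hg2b : g ^ 2 ∉ insert b (R \ {g * h}) := by
      rintro (hb' | hR')
      exacts [hgb (hb' ▸ dvd_pow_self g two_ne_zero), hg2 hR'.1]
    refine ⟨insert (g ^ 2) (insert b (R \ {g * h})),
      ((hR.mono Set.sdiff_subset).insert hbS fun e he _ => hb e he).insert hg2S ?_, ?_⟩
    · rintro e (rfl | he) -
      exacts [hcop _ hgb, hcop e (hT e he)]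
    · rw [Set.ncard_insert_of_notMem hg2b (hRfin.sdiff.insert b),
        Set.ncard_insert_of_notMem hbT hRfin.sdiff, ← Set.ncard_sdiff_singleton_add_one hfR hRfin]
      omega
  · push Not at hex
    refine ⟨insert (g ^ 2) R, hR.insert hg2S fun e he _ => hcop e (hex e he), ?_⟩
    rw [Set.ncard_insert_of_notMem hg2 hRfin]
    omega

end MaximalGcdFamily

open MaximalGcdFamily in
/-- Over `F_2`, if `R ⊆ S_n` is a maximum-cardinality family with pairwise gcd of degree
at most `1` and `n` is even with `n ≥ 4`, then `g^2 ∈ R` for every monic irreducible `g`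
of degree `n/2` with `g ≠ X`. -/
theorem maximal_contains_squares (n : ℕ) (hn : 4 ≤ n) (he : Even n)
    (R : Set ((ZMod 2)[X]))
    (hRS : ∀ f ∈ R, f.Monic ∧ f.natDegree = n ∧ f.eval 0 ≠ 0)
    (hRp : ∀ f ∈ R, ∀ g ∈ R, f ≠ g → (EuclideanDomain.gcd f g).natDegree ≤ 1)
    (hmax : ∀ R' : Set ((ZMod 2)[X]),
      (∀ f ∈ R', f.Monic ∧ f.natDegree = n ∧ f.eval 0 ≠ 0) →
      (∀ f ∈ R', ∀ g ∈ R', f ≠ g → (EuclideanDomain.gcd f g).natDegree ≤ 1) →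
      R'.ncard ≤ R.ncard) :
    ∀ g : (ZMod 2)[X], g.Monic → Irreducible g → g.natDegree = n / 2 → g ≠ X →
      g ^ 2 ∈ R := by
  intro g _ hg hgdeg hgX
  obtain ⟨d, rfl⟩ := he.two_dvd
  by_contra hg2
  obtain ⟨R', hR', hlt⟩ :=
    exists_admissible_ncard_gt ⟨hRS, hRp⟩ (by omega) hg (by omega) hgX hg2
  exact (hmax R' hR'.1 hR'.2).not_gt hlt
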